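/- arXiv:2504.07013 — 2 statements merged into one kernel-verified Lean document; each statement's English description precedes it below -/
import Mathlib

section
/- In a finite directed multigraph, a vertex s has only countably many infinite walks starting from it if and only if for every vertex t reachable from s, any two closed walks (cycles) starting and ending at t are comparable (one is a prefix of the other). -/
/-- `IsWalk src tgt s p t` : the list of edges `p` is a finite walk from `s` to `t`
in the directed multigraph with edge-endpoint maps `src`, `tgt`. -/
def IsWalk {V E : Type} (src tgt : E → V) : V → List E → V → Prop
  | s, [], t => s = t
  | s, e :: p, t => src e = s ∧ IsWalk src tgt (tgt e) p t

/-- The set of infinite walks starting at `s`: infinite sequences of composable edges. -/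
def InfWalk {V E : Type} (src tgt : E → V) (s : V) : Set (ℕ → E) :=
  {e | src (e 0) = s ∧ ∀ n, tgt (e n) = src (e (n + 1))}

/-- A cycle through `t` is a nonempty finite walk from `t` to `t`. -/
def IsCycle {V E : Type} (src tgt : E → V) (t : V) (p : List E) : Prop :=
  p ≠ [] ∧ IsWalk src tgt t p t

section Aux

variable {V E : Type} {src tgt : E → V}

theorem isWalk_nil {s t : V} : IsWalk src tgt s [] t ↔ s = t := Iff.rfl

theorem isWalk_cons {s t : V} {e : E} {l : List E} :
    IsWalk src tgt s (e :: l) t ↔ src e = s ∧ IsWalk src tgt (tgt e) l t := Iff.rfl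

theorem isWalk_append {s t u : V} {p q : List E} (hp : IsWalk src tgt s p t)
    (hq : IsWalk src tgt t q u) : IsWalk src tgt s (p ++ q) u := by
  induction p generalizing s with
  | nil => rw [isWalk_nil] at hp; subst hp; simpa using hq
  | cons e l ih =>
    rw [isWalk_cons] at hp
    exact ⟨hp.1, ih hp.2⟩

theorem walk_src_head {s t : V} {e : E} {l : List E} (h : IsWalk src tgt s (e :: l) t) :
    src e = s := h.1

theorem walk_src_getElem_zero {l : List E} {s t : V} (h : IsWalk src tgt s l t)
    (hl : 0 < l.length) : src (l[0]'hl) = s := by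
  match l, hl with
  | e :: l', _ => simpa using h.1

theorem walk_consec {l : List E} {s t : V} (h : IsWalk src tgt s l t) :
    ∀ i, (hi : i + 1 < l.length) → tgt (l[i]'(by omega)) = src (l[i + 1]'hi) := by
  induction l generalizing s with
  | nil => intro i hi; simp at hi
  | cons e l ih =>
    intro i hi
    rw [isWalk_cons] at h
    match i with
    | 0 =>
      match l, hi with
      | e' :: l', _ =>
        have := h.2.1
        simpa using this.symm
    | Nat.succ j =>
      have hj : j + 1 < l.length := by simpa using hi
      simpa using ih h.2 j hj

/-- the finite segment of an infinite sequence: `n` edges starting at index `a`. -/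
def seg (e : ℕ → E) (a n : ℕ) : List E := (List.range n).map (fun i => e (a + i))

@[simp] theorem seg_length (e : ℕ → E) (a n : ℕ) : (seg e a n).length = n := by
  simp [seg]

@[simp] theorem seg_getElem (e : ℕ → E) (a n i : ℕ) (h : i < (seg e a n).length) :
    (seg e a n)[i] = e (a + i) := by
  simp [seg]

theorem seg_succ (e : ℕ → E) (a n : ℕ) : seg e a (n + 1) = e a :: seg e (a + 1) n := by
  apply List.ext_getElem (by simp)
  intro i h1 h2
  match i with
  | 0 => simp
  | Nat.succ j =>
    simp only [seg_getElem, List.getElem_cons_succ]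
    congr 1
    omega

theorem walk_seg {e : ℕ → E} (he : ∀ n, tgt (e n) = src (e (n + 1))) :
    ∀ n a, IsWalk src tgt (src (e a)) (seg e a n) (src (e (a + n))) := by
  intro n
  induction n with
  | zero => intro a; simp [seg, isWalk_nil]
  | succ n ih =>
    intro a
    rw [seg_succ, isWalk_cons]
    refine ⟨rfl, ?_⟩
    rw [he a]
    have harith : a + (n + 1) = (a + 1) + n := by omega
    rw [harith]
    exact ih (a + 1)

theorem prefix_of_getElem {p q : List E} (hlen : p.length ≤ q.length)
    (h : ∀ i (h1 : i < p.length), p[i] = q[i]'(lt_of_lt_of_le h1 hlen)) : p <+: q := by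
  rw [List.prefix_iff_eq_take]
  apply List.ext_getElem (by simp [hlen, Nat.min_eq_left hlen])
  intro n h1 h2
  simpa using h n h1

theorem not_countable_nat_bool : ¬ Countable (ℕ → Bool) := by
  intro h
  have h2 : Countable (Set ℕ) :=
    Countable.of_equiv (ℕ → Bool) (Equiv.arrowCongr (Equiv.refl ℕ) Equiv.propEquivBool.symm)
  obtain ⟨f, hf⟩ := Countable.exists_injective_nat (Set ℕ)
  exact Function.cantor_injective f hf

/-- eventually periodic sequences into a finite type form a countable set. -/
theorem countable_eventually_periodic {E : Type} [Finite E] :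
    {e : ℕ → E | ∃ N p : ℕ, ∀ n, N ≤ n → e (n + (p + 1)) = e n}.Countable := by
  have hsub : {e : ℕ → E | ∃ N p : ℕ, ∀ n, N ≤ n → e (n + (p + 1)) = e n} ⊆
      ⋃ (N : ℕ) (p : ℕ), {e : ℕ → E | ∀ n, N ≤ n → e (n + (p + 1)) = e n} := by
    rintro e ⟨N, p, h⟩
    exact Set.mem_iUnion.2 ⟨N, Set.mem_iUnion.2 ⟨p, h⟩⟩
  apply Set.Countable.mono hsub
  apply Set.countable_iUnion; intro N
  apply Set.countable_iUnion; intro p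
  set k := N + p + 1 with hk
  rw [← Set.countable_coe_iff]
  have : Countable (Fin k → E) := inferInstance
  apply Function.Injective.countable
    (f := fun (e : {e : ℕ → E | ∀ n, N ≤ n → e (n + (p + 1)) = e n}) (i : Fin k) => e.1 i.1)
  rintro ⟨e, he⟩ ⟨e', he'⟩ hF
  have key : ∀ n, e n = e' n := by
    intro n
    induction n using Nat.strong_induction_on with
    | _ n ih =>
      by_cases hn : n < k
      · exact congrFun hF ⟨n, hn⟩
      · push_neg at hn
        have h1 : N ≤ n - (p + 1) := by omega
        have h2 : (n - (p + 1)) + (p + 1) = n := by omega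
        calc e n = e ((n - (p + 1)) + (p + 1)) := by rw [h2]
          _ = e (n - (p + 1)) := he _ h1
          _ = e' (n - (p + 1)) := ih _ (by omega)
          _ = e' ((n - (p + 1)) + (p + 1)) := (he' _ h1).symm
          _ = e' n := by rw [h2]
  simp only [Subtype.mk.injEq]
  funext n
  exact key n

/-- the chain of blocks used to build uncountably many walks -/
def chainList {E : Type} (r p q : List E) (b : ℕ → Bool) : ℕ → List E
  | 0 => r
  | k + 1 => chainList r p q b k ++ (if b k then p else q)

theorem chainList_length {E : Type} {r p q : List E} (hp : p ≠ []) (hq : q ≠ []) (b : ℕ → Bool) :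
    ∀ k, r.length + k ≤ (chainList r p q b k).length := by
  intro k
  induction k with
  | zero => simp [chainList]
  | succ k ih =>
    have hblock : 0 < (if b k then p else q).length := by
      cases hb : b k <;> simp [hb, List.length_pos_iff, hp, hq]
    simp only [chainList, List.length_append]
    omega

theorem chainList_prefix {E : Type} (r p q : List E) (b : ℕ → Bool) {k k' : ℕ} (h : k ≤ k') :
    chainList r p q b k <+: chainList r p q b k' := by
  induction k' with
  | zero => have : k = 0 := by omega
            subst this; exact List.prefix_refl _
  | succ k' ih =>
    rcases Nat.lt_or_ge k (k' + 1) with h' | h'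
    · exact (ih (by omega)).trans ⟨_, rfl⟩
    · have : k = k' + 1 := by omega
      subst this; exact List.prefix_refl _

theorem chainList_walk {V E : Type} {src tgt : E → V} {s t : V} {r p q : List E}
    (hr : IsWalk src tgt s r t) (hp : IsWalk src tgt t p t) (hq : IsWalk src tgt t q t)
    (b : ℕ → Bool) : ∀ k, IsWalk src tgt s (chainList r p q b k) t := by
  intro k
  induction k with
  | zero => exact hr
  | succ k ih =>
    refine isWalk_append ih ?_
    cases hb : b k <;> simp [hb, hp, hq]

theorem chainList_congr {E : Type} (r p q : List E) {b b' : ℕ → Bool} {k : ℕ}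
    (h : ∀ j, j < k → b j = b' j) : chainList r p q b k = chainList r p q b' k := by
  induction k with
  | zero => rfl
  | succ k ih =>
    simp only [chainList]
    rw [ih (fun j hj => h j (by omega)), h k (by omega)]

end Aux

/-- In a finite directed multigraph, a vertex `s` has only countably many infinite walks
starting from it iff for every vertex `t` reachable from `s`, any two cycles through `t`
are comparable (one is a prefix of the other). -/
theorem countable_infinite_walks_iff_cycles_comparable
    {V E : Type} [Finite V] [Finite E] (src tgt : E → V) (s : V) :
    (InfWalk src tgt s).Countable ↔
      ∀ t : V, (∃ r : List E, IsWalk src tgt s r t) →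
        ∀ p q : List E, IsCycle src tgt t p → IsCycle src tgt t q →
          (p <+: q ∨ q <+: p) := by
  constructor
  · -- countable → comparable
    intro hcount t hreach p q hp hq
    by_contra hnc
    push_neg at hnc
    obtain ⟨r, hr⟩ := hreach
    have hpne : p ≠ [] := hp.1
    have hqne : q ≠ [] := hq.1
    set dflt : E := p.head hpne with hdflt
    set f : (ℕ → Bool) → ℕ → E :=
      fun b n => (chainList r p q b (n + 1)).getD n dflt with hf
    -- stability of f
    have hlen : ∀ (b : ℕ → Bool) (k : ℕ), r.length + k ≤ (chainList r p q b k).length :=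
      fun b k => chainList_length hpne hqne b k
    have hstab : ∀ (b : ℕ → Bool) (k n : ℕ) (h : n < (chainList r p q b k).length),
        f b n = (chainList r p q b k)[n] := by
      intro b k n h
      have hn1 : n < (chainList r p q b (n + 1)).length := by
        have := hlen b (n + 1); omega
      rw [hf]
      simp only
      rw [List.getD_eq_getElem _ _ hn1]
      rcases Nat.le_total k (n + 1) with hk | hk
      · exact ((chainList_prefix r p q b hk).getElem h).symm
      · exact (chainList_prefix r p q b hk).getElem hn1
    -- f b is an infinite walk
    have hmem : ∀ b, f b ∈ InfWalk src tgt s := by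
      intro b
      have hw : ∀ k, IsWalk src tgt s (chainList r p q b k) t :=
        chainList_walk hr hp.2 hq.2 b
      constructor
      · -- src (f b 0) = s
        have h1 : 0 < (chainList r p q b 1).length := by
          have := hlen b 1; omega
        rw [hstab b 1 0 h1]
        exact walk_src_getElem_zero (hw 1) h1
      · intro n
        have h2 : n + 1 + 1 ≤ (chainList r p q b (n + 2)).length := by
          have := hlen b (n + 2); omega
        have hA : f b n = (chainList r p q b (n + 2))[n]'(by omega) :=
          hstab b (n + 2) n (by omega)
        have hB : f b (n + 1) = (chainList r p q b (n + 2))[n + 1]'(by omega) :=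
          hstab b (n + 2) (n + 1) (by omega)
        rw [hA, hB]
        exact walk_consec (hw (n + 2)) n (by omega)
    -- f is injective
    have hinj : Function.Injective f := by
      intro b b' hbb'
      by_contra hne
      have hex : ∃ k, b k ≠ b' k := by
        by_contra hall
        push_neg at hall
        exact hne (funext hall)
      set k := Nat.find hex with hkdef
      have hk : b k ≠ b' k := Nat.find_spec hex
      have hmin : ∀ j, j < k → b j = b' j := by
        intro j hj
        by_contra hj'
        exact Nat.find_min hex hj hj'
      have hLL : chainList r p q b k = chainList r p q b' k := chainList_congr r p q hmin
      set L := chainList r p q b k with hL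
      set m := L.length with hm
      set P : List E := if b k then p else q with hP
      set Q : List E := if b' k then p else q with hQ
      -- pointwise values of P and Q inside f
      have hPpt : ∀ i (hi : i < P.length), P[i] = f b (m + i) := by
        intro i hi
        have hlen2 : m + i < (chainList r p q b (k + 1)).length := by
          simp only [chainList, List.length_append, ← hL, ← hm, ← hP]
          omega
        rw [hstab b (k + 1) (m + i) hlen2]
        have : (chainList r p q b (k + 1))[m + i]'hlen2 = P[i] := by
          simp only [chainList, ← hL, ← hP]
          rw [List.getElem_append_right (by omega)]
          congr 1
          omega
        rw [this]
      have hQpt : ∀ i (hi : i < Q.length), Q[i] = f b' (m + i) := by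
        intro i hi
        have hlen2 : m + i < (chainList r p q b' (k + 1)).length := by
          simp only [chainList, List.length_append, ← hLL, ← hL, ← hm, ← hQ]
          omega
        rw [hstab b' (k + 1) (m + i) hlen2]
        have : (chainList r p q b' (k + 1))[m + i]'hlen2 = Q[i] := by
          simp only [chainList, ← hLL, ← hL, ← hQ]
          rw [List.getElem_append_right (by omega)]
          congr 1
          omega
        rw [this]
      have hPQ : ∀ i (h1 : i < P.length) (h2 : i < Q.length), P[i] = Q[i] := by
        intro i h1 h2
        rw [hPpt i h1, hQpt i h2, hbb']
      -- P, Q are {p, q} in some order, so comparability of P Q contradicts hnc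
      have hcompPQ : P <+: Q ∨ Q <+: P := by
        rcases Nat.le_total P.length Q.length with hle | hle
        · exact Or.inl (prefix_of_getElem hle (fun i h1 => hPQ i h1 (lt_of_lt_of_le h1 hle)))
        · exact Or.inr (prefix_of_getElem hle (fun i h1 => (hPQ i (lt_of_lt_of_le h1 hle) h1).symm))
      rw [hP, hQ] at hcompPQ
      cases hb : b k <;> cases hb' : b' k
      · exact hk (by rw [hb, hb'])
      · rw [hb, hb'] at hcompPQ
        simp only [Bool.false_eq_true, if_true, if_false] at hcompPQ
        rcases hcompPQ with h | h
        · exact hnc.2 h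
        · exact hnc.1 h
      · rw [hb, hb'] at hcompPQ
        simp only [Bool.false_eq_true, if_true, if_false] at hcompPQ
        rcases hcompPQ with h | h
        · exact hnc.1 h
        · exact hnc.2 h
      · exact hk (by rw [hb, hb'])
    -- uncountability contradiction
    have hrange : Set.range f ⊆ InfWalk src tgt s := by
      rintro _ ⟨b, rfl⟩; exact hmem b
    have hcr : (Set.range f).Countable := hcount.mono hrange
    haveI : Countable ↥(Set.range f) := hcr.to_subtype
    exact not_countable_nat_bool (Countable.of_equiv _ (Equiv.ofInjective f hinj).symm)
  · -- comparable → countable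
    intro hcomp
    apply Set.Countable.mono _ countable_eventually_periodic
    intro e he
    obtain ⟨he0, hec⟩ := he
    -- find a vertex visited infinitely often
    obtain ⟨t, ht⟩ := Finite.exists_infinite_fiber (fun n => src (e n))
    have hS : ((fun n => src (e n)) ⁻¹' {t}).Infinite := Set.infinite_coe_iff.mp ht
    obtain ⟨n0, hn0⟩ := hS.nonempty
    obtain ⟨n1, hn1S, hn1⟩ := hS.exists_gt n0
    have hn0t : src (e n0) = t := hn0
    have hn1t : src (e n1) = t := hn1S
    set d := n1 - n0 with hd
    have hd1 : 1 ≤ d := by omega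
    -- t is reachable
    have hreach : ∃ r0 : List E, IsWalk src tgt s r0 t := by
      refine ⟨seg e 0 n0, ?_⟩
      have := walk_seg hec n0 0
      rw [he0] at this
      simpa [hn0t] using this
    have hcompt := hcomp t hreach
    -- periodicity claim
    have hper : ∀ n, n0 ≤ n → e (n + d) = e n := by
      intro n hn
      obtain ⟨m, hmS, hm⟩ := hS.exists_gt (n + d)
      have hmt : src (e m) = t := hmS
      -- cycles A = seg n0 d, B = seg n0 (m - n0)
      have hA : IsCycle src tgt t (seg e n0 d) := by
        refine ⟨by simp [seg]; omega, ?_⟩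
        have := walk_seg hec d n0
        have hnd : n0 + d = n1 := by omega
        rw [hnd, hn0t, hn1t] at this
        exact this
      have hB : IsCycle src tgt t (seg e n0 (m - n0)) := by
        refine ⟨by simp [seg]; omega, ?_⟩
        have := walk_seg hec (m - n0) n0
        have hnd : n0 + (m - n0) = m := by omega
        rw [hnd, hn0t, hmt] at this
        exact this
      have hAB : IsCycle src tgt t (seg e n0 d ++ seg e n0 (m - n0)) := by
        refine ⟨by simp [seg]; omega, isWalk_append hA.2 hB.2⟩
      have hcompB := hcompt _ _ hB hAB
      have hpre : seg e n0 (m - n0) <+: seg e n0 d ++ seg e n0 (m - n0) := by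
        rcases hcompB with h | h
        · exact h
        · exfalso
          have := h.length_le
          simp only [List.length_append, seg_length] at this
          omega
      set i := n - n0 + d with hi
      have hiB : i < (seg e n0 (m - n0)).length := by simp; omega
      have h1 : (seg e n0 (m - n0))[i]'hiB =
          (seg e n0 d ++ seg e n0 (m - n0))[i]'(by simp; omega) := hpre.getElem hiB
      have h2 : (seg e n0 d ++ seg e n0 (m - n0))[i]'(by simp; omega) =
          (seg e n0 (m - n0))[i - d]'(by simp; omega) := by
        rw [List.getElem_append_right (by simp; omega)]
        congr 1
        simp
      rw [h2] at h1
      rw [seg_getElem, seg_getElem] at h1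
      have e1 : n0 + i = n + d := by omega
      have e2 : n0 + (i - d) = n := by omega
      rw [e1, e2] at h1
      exact h1
    refine ⟨n0, d - 1, ?_⟩
    intro n hn
    have : d - 1 + 1 = d := by omega
    rw [this]
    exact hper n hn
end

section
/- If in a finite directed multigraph all cycles through any vertex reachable from s are pairwise comparable, then every infinite walk from s is eventually periodic, determined by a finite prefix; hence the set of infinite walks from s is countable. -/
/-- A walk determines its endpoint. -/
lemma isWalk_det {V E : Type} (src tgt : E → V) :
    ∀ (p : List E) (a b c : V), IsWalk src tgt a p b → IsWalk src tgt a p c → b = c := by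
  intro p
  induction p with
  | nil => intro a b c hb hc; exact hb.symm.trans hc
  | cons e p ih => intro a b c hb hc; exact ih _ _ _ hb.2 hc.2

/-- Any finite segment of an infinite walk is a finite walk. -/
lemma isWalk_seg {V E : Type} (src tgt : E → V) (e : ℕ → E)
    (hstep : ∀ n, tgt (e n) = src (e (n + 1))) :
    ∀ (n L : ℕ), IsWalk src tgt (src (e L))
      ((List.range n).map (fun i => e (L + i))) (src (e (L + n))) := by
  intro n
  induction n with
  | zero => intro L; simp [IsWalk]
  | succ n ih =>
    intro L
    rw [List.range_succ_eq_map]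
    simp only [List.map_cons, List.map_map]
    refine ⟨by simp, ?_⟩
    have hfun : ((fun i => e (L + i)) ∘ (· + 1)) = fun i => e ((L + 1) + i) := by
      funext i
      simp only [Function.comp]
      exact congrArg e (by omega)
    have hidx : L + (n + 1) = (L + 1) + n := by omega
    rw [show L + 0 = L from by omega, hstep L, hfun, hidx]
    exact ih (L + 1)

/-- The set of sequences eventually periodic with fixed `N`, positive `k` is countable. -/
lemma periodicSet_countable {E : Type} [Finite E] (N k : ℕ) (hk : 0 < k) :
    {e : ℕ → E | ∀ n ≥ N, e (n + k) = e n}.Countable := by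
  classical
  set ext : (Fin (N + k) → E) → (ℕ → E) := fun g n =>
    if h : n < N + k then g ⟨n, h⟩
    else g ⟨N + (n - N) % k, by have := Nat.mod_lt (n - N) hk; omega⟩ with hext
  have hsub : {e : ℕ → E | ∀ n ≥ N, e (n + k) = e n} ⊆ Set.range ext := by
    intro e he
    refine ⟨fun i => e i, ?_⟩
    have key : ∀ a, e (N + a) = e (N + a % k) := by
      intro a
      induction a using Nat.strong_induction_on with
      | _ a ih =>
        by_cases hlt : a < k
        · rw [Nat.mod_eq_of_lt hlt]
        · have h1 : a - k < a := by omega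
          have h2 : N + a = (N + (a - k)) + k := by omega
          rw [h2, he _ (by omega), ih (a - k) h1]
          congr 1
          conv_rhs => rw [Nat.mod_eq_sub_mod (show k ≤ a by omega)]
    funext n
    rw [hext]
    simp only
    split
    · rfl
    · rename_i hn
      have hnN : n = N + (n - N) := by omega
      conv_rhs => rw [hnN]
      exact (key (n - N)).symm
  exact Set.Countable.mono hsub (Set.countable_range ext)

/-- If in a finite directed multigraph all cycles through any vertex reachable from `s`
are pairwise comparable, then every infinite walk from `s` is eventually periodic
(it eventually repeats with some positive period), and hence the set of infinite
walks from `s` is countable. -/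
theorem eventually_periodic_and_countable_of_cycles_comparable
    {V E : Type} [Finite V] [Finite E] (src tgt : E → V) (s : V)
    (h : ∀ t : V, (∃ r : List E, IsWalk src tgt s r t) →
      ∀ p q : List E, IsCycle src tgt t p → IsCycle src tgt t q →
        (p <+: q ∨ q <+: p)) :
    (∀ e ∈ InfWalk src tgt s, ∃ N k : ℕ, 0 < k ∧ ∀ n ≥ N, e (n + k) = e n) ∧
      (InfWalk src tgt s).Countable := by
  classical
  have main : ∀ e ∈ InfWalk src tgt s, ∃ N k : ℕ, 0 < k ∧ ∀ n ≥ N, e (n + k) = e n := by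
    rintro e ⟨h0, hstep⟩
    -- find a vertex visited infinitely often
    obtain ⟨t, htinf⟩ := Finite.exists_infinite_fiber (fun n => src (e n))
    have ht : ((fun n => src (e n)) ⁻¹' {t}).Infinite := Set.infinite_coe_iff.mp htinf
    obtain ⟨N, hN⟩ := ht.nonempty
    have hN : src (e N) = t := hN
    -- t is reachable from s
    have hreach : ∃ r : List E, IsWalk src tgt s r t := by
      have := isWalk_seg src tgt e hstep N 0
      rw [h0] at this
      rw [show 0 + N = N from by omega, hN] at this
      exact ⟨_, this⟩
    -- a cycle at t exists
    obtain ⟨M, hM, hMgt⟩ := ht.exists_gt N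
    have hM : src (e M) = t := hM
    have hc0 : IsCycle src tgt t ((List.range (M - N)).map (fun i => e (N + i))) := by
      constructor
      · simp [List.range_eq_nil]; omega
      · have := isWalk_seg src tgt e hstep (M - N) N
        rw [hN, show N + (M - N) = M from by omega, hM] at this
        exact this
    -- minimal cycle at t
    have hP : ∃ n : ℕ, ∃ p : List E, IsCycle src tgt t p ∧ p.length = n :=
      ⟨_, _, hc0, rfl⟩
    obtain ⟨m, hm, hmk⟩ := Nat.find_spec hP
    have hmin : ∀ p : List E, IsCycle src tgt t p → m.length ≤ p.length := by
      intro p hp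
      rw [hmk]
      exact Nat.find_min' hP ⟨p, hp, rfl⟩
    set k := m.length with hkdef
    have kpos : 0 < k := by
      rw [hkdef]
      exact List.length_pos_iff.mpr hm.1
    -- every cycle at t has m as a prefix
    have hA : ∀ p : List E, IsCycle src tgt t p → m <+: p := by
      intro p hp
      rcases h t hreach m p hm hp with h1 | h2
      · exact h1
      · have hle : k ≤ p.length := hmin p hp
        have hle2 : p.length ≤ m.length := h2.length_le
        have : p = m := h2.eq_of_length (by omega)
        rw [this]
    set f : ℕ → E := fun r => m.getD r (e 0) with hf
    -- step lemma: from any visit of t, the walk follows m and returns to t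
    have step : ∀ L, src (e L) = t →
        (∀ r < k, e (L + r) = f r) ∧ src (e (L + k)) = t := by
      intro L hL
      obtain ⟨L', hL', hLL'⟩ := ht.exists_gt L
      have hL' : src (e L') = t := hL'
      set q : List E := (List.range (L' - L)).map (fun i => e (L + i)) with hq
      have hqc : IsCycle src tgt t q := by
        constructor
        · simp [hq, List.range_eq_nil]; omega
        · have := isWalk_seg src tgt e hstep (L' - L) L
          rw [hL, show L + (L' - L) = L' from by omega, hL'] at this
          exact this
      have hpre : m <+: q := hA q hqc
      have hqlen : q.length = L' - L := by simp [hq]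
      have hklen : k ≤ L' - L := by
        have := hpre.length_le
        omega
      have hepr : ∀ r < k, e (L + r) = f r := by
        intro r hr
        have hrm : r < m.length := by omega
        have hrq : r < q.length := by omega
        have h1 : m[r]'hrm = q[r]'hrq := hpre.getElem hrm
        have h2 : q[r]'hrq = e (L + r) := by simp [hq]
        rw [← h2, ← h1, hf]
        exact (List.getD_eq_getElem m (e 0) hrm).symm
      refine ⟨hepr, ?_⟩
      have hseg : (List.range k).map (fun i => e (L + i)) = m := by
        apply List.ext_getElem
        · simp [hkdef]
        · intro i h1 h2
          have hik : i < k := by simpa using h1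
          simp only [List.getElem_map, List.getElem_range]
          rw [hepr i hik, hf]
          exact List.getD_eq_getElem m (e 0) h2
      have hw := isWalk_seg src tgt e hstep k L
      rw [hL, hseg] at hw
      exact isWalk_det src tgt m t _ t hw hm.2
    -- the blocks
    have blocks : ∀ j : ℕ, src (e (N + j * k)) = t := by
      intro j
      induction j with
      | zero => simpa using hN
      | succ j ih =>
        have : N + (j + 1) * k = (N + j * k) + k := by ring
        rw [this]
        exact (step _ ih).2
    have key : ∀ j r, r < k → e (N + j * k + r) = f r := fun j r hr =>
      (step _ (blocks j)).1 r hr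
    refine ⟨N, k, kpos, ?_⟩
    intro n hn
    obtain ⟨a, rfl⟩ : ∃ a, n = N + a := ⟨n - N, by omega⟩
    have hd := Nat.div_add_mod a k
    set b := a / k with hb
    set r := a % k with hr
    have hrk : r < k := Nat.mod_lt _ kpos
    have h1 : N + b * k + r = N + a := by rw [mul_comm b k]; omega
    have h2 : N + (b + 1) * k + r = N + a + k := by
      rw [add_mul, one_mul, mul_comm b k]; omega
    calc e (N + a + k) = e (N + (b + 1) * k + r) := by rw [h2]
      _ = f r := key (b + 1) r hrk
      _ = e (N + b * k + r) := (key b r hrk).symm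
      _ = e (N + a) := by rw [h1]
  refine ⟨main, ?_⟩
  have hsub : InfWalk src tgt s ⊆
      ⋃ (N : ℕ) (k : ℕ) (_ : 0 < k), {e : ℕ → E | ∀ n ≥ N, e (n + k) = e n} := by
    intro e he
    obtain ⟨N, k, hk, hp⟩ := main e he
    exact Set.mem_iUnion.2 ⟨N, Set.mem_iUnion.2 ⟨k, Set.mem_iUnion.2 ⟨hk, hp⟩⟩⟩
  exact Set.Countable.mono hsub
    (Set.countable_iUnion fun N => Set.countable_iUnion fun k =>
      Set.countable_iUnion fun hk => periodicSet_countable N k hk)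
end
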